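/- arXiv:2405.14958 — 5 statements merged into one kernel-verified Lean document; each statement's English description precedes it below -/
import Mathlib

section
/- For every integer n ≥ 1 and every real (or complex) z with |z| < 1, the Gauss hypergeometric function satisfies F(1,1,n+2,z) = ((n+1)/z) · ( ∑_{s=1}^{n} (1/s) ((z-1)/z)^{n-s} − ((z-1)/z)^{n} log(1−z) ). -/
open scoped BigOperators

/-- The Gauss hypergeometric function `₂F₁(a,b;c;z)`, defined by its power series
(convergent for `|z| < 1`). -/
noncomputable def hypF (a b c : ℂ) (z : ℂ) : ℂ :=
  ∑' k : ℕ, ((ascPochhammer ℂ k).eval a * (ascPochhammer ℂ k).eval b /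
      ((ascPochhammer ℂ k).eval c * (Nat.factorial k : ℂ))) * z ^ k

/-! For `c = m + 1` the coefficients of `F(1,1;c;z)` are `k! / (c)ₖ`, and comparing coefficients
gives the contiguous relation `(1 - z) F(1,1;c;z) = 1 - ((c-1)/c) z F(1,1;c+1;z)`. Starting from
`F(1,1;2;z) = -log(1-z)/z` (the logarithm series), solving this relation for `F(1,1;c+1;z)` gives
the closed form by induction on `n`: with `w = (z-1)/z` one has `1 - z = -wz`, and the finite sum
obeys `S_{n+1} = w S_n + 1/(n+1)`. -/

open Finset Nat

lemma hypF_one_one_natCast_add_one (m : ℕ) (z : ℂ) :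
    hypF 1 1 ((m : ℂ) + 1) z = ∑' k : ℕ, (k ! : ℂ) / (m + 1).ascFactorial k * z ^ k := by
  refine tsum_congr fun k ↦ ?_
  have hk : (k ! : ℂ) ≠ 0 := Nat.cast_ne_zero.mpr (factorial_ne_zero k)
  rw [ascPochhammer_eval_one, ← Nat.cast_add_one, ← ascPochhammer_eval_cast,
    ascPochhammer_nat_eq_ascFactorial, mul_div_mul_right _ _ hk]

lemma norm_factorial_div_ascFactorial_le_one (m k : ℕ) :
    ‖(k ! : ℂ) / (m + 1).ascFactorial k‖ ≤ 1 := by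
  rw [norm_div, Complex.norm_natCast, Complex.norm_natCast,
    div_le_one (by exact_mod_cast ascFactorial_pos m k), ← one_ascFactorial]
  exact_mod_cast ascFactorial_le k (by omega)

lemma hasSum_hypF_one_one (m : ℕ) {z : ℂ} (hz : ‖z‖ < 1) :
    HasSum (fun k : ℕ ↦ (k ! : ℂ) / (m + 1).ascFactorial k * z ^ k)
      (hypF 1 1 ((m : ℂ) + 1) z) := by
  rw [hypF_one_one_natCast_add_one]
  refine (Summable.of_norm_bounded (summable_geometric_of_lt_one (norm_nonneg z) hz)
    fun k ↦ ?_).hasSum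
  rw [norm_mul, norm_pow]
  exact mul_le_of_le_one_left (by positivity) (norm_factorial_div_ascFactorial_le_one m k)

lemma factorial_div_ascFactorial_succ_sub (m k : ℕ) :
    ((k + 1)! : ℂ) / (m + 1).ascFactorial (k + 1) - k ! / (m + 1).ascFactorial k =
      -(m / (m + 1)) * (k ! / (m + 2).ascFactorial k) := by
  have hsucc : ((m + 1).ascFactorial (k + 1) : ℂ) = (m + 1 + k) * (m + 1).ascFactorial k := by
    exact_mod_cast ascFactorial_succ
  have hshift :
      (m + 1 : ℂ) * (m + 2).ascFactorial k = (m + 1 + k) * (m + 1).ascFactorial k := by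
    exact_mod_cast succ_ascFactorial (m + 1) k
  have h1 : ((m + 1).ascFactorial k : ℂ) ≠ 0 := by exact_mod_cast (ascFactorial_pos m k).ne'
  have h2 : ((m + 2).ascFactorial k : ℂ) ≠ 0 :=
    mod_cast (ascFactorial_pos (m + 1) k).ne'
  have h3 : (m + 1 + k : ℂ) ≠ 0 := by exact_mod_cast (by omega : m + 1 + k ≠ 0)
  rw [hsucc, factorial_succ]
  push_cast
  field_simp
  linear_combination -(k ! : ℂ) * m * hshift

theorem one_sub_mul_hypF_one_one (m : ℕ) {z : ℂ} (hz : ‖z‖ < 1) :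
    (1 - z) * hypF 1 1 ((m : ℂ) + 1) z =
      1 - (m / (m + 1)) * z * hypF 1 1 ((m : ℂ) + 2) z := by
  have hF := hasSum_hypF_one_one m hz
  have hG : HasSum (fun k : ℕ ↦ (k ! : ℂ) / (m + 2).ascFactorial k * z ^ k)
      (hypF 1 1 ((m : ℂ) + 2) z) := by
    simpa [add_assoc, one_add_one_eq_two] using hasSum_hypF_one_one (m + 1) hz
  have hlhs := ((hasSum_nat_add_iff' 1).mpr hF).sub (hF.mul_left z)
  simp only [range_one, sum_singleton, factorial_zero, ascFactorial_zero, cast_one, div_one,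
    pow_zero, mul_one] at hlhs
  have hrhs := hG.mul_left (-(m / (m + 1)) * z)
  have := hlhs.unique (hrhs.congr_fun fun k ↦ ?_)
  · linear_combination this
  linear_combination z ^ (k + 1) * factorial_div_ascFactorial_succ_sub m k

theorem hypF_one_one_two {z : ℂ} (hz : ‖z‖ < 1) (hz0 : z ≠ 0) :
    hypF 1 1 2 z = -Complex.log (1 - z) / z := by
  have hF := (hasSum_hypF_one_one 1 hz).mul_left z
  rw [show ((1 : ℕ) : ℂ) + 1 = 2 by norm_num] at hF
  rw [eq_div_iff hz0, mul_comm, hF.unique ((Complex.hasSum_taylorSeries_neg_log' hz).congr_fun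
    fun k ↦ ?_)]
  have hasc : ((2 : ℕ).ascFactorial k : ℂ) = (k + 1)! := by
    exact_mod_cast by simpa [add_comm] using factorial_mul_ascFactorial 1 k
  rw [hasc, factorial_succ, cast_mul, pow_succ]
  have hk : (k ! : ℂ) ≠ 0 := Nat.cast_ne_zero.mpr (factorial_ne_zero k)
  push_cast
  field_simp

lemma sum_Icc_succ_inv_mul_pow {K : Type*} [Field K] (n : ℕ) (w : K) :
    ∑ s ∈ Icc 1 (n + 1), 1 / (s : K) * w ^ (n + 1 - s) =
      w * ∑ s ∈ Icc 1 n, 1 / (s : K) * w ^ (n - s) + 1 / (n + 1) := by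
  rw [sum_Icc_succ_top (by omega), mul_sum, Nat.sub_self, pow_zero, mul_one, cast_succ]
  congr 1
  refine sum_congr rfl fun s hs ↦ ?_
  rw [Nat.sub_add_comm (mem_Icc.mp hs).2, pow_succ]
  ring

theorem stmt_2_general (n : ℕ) (z : ℂ) (hz : ‖z‖ < 1) (hz0 : z ≠ 0) :
    hypF 1 1 ((n : ℂ) + 2) z =
      (((n : ℂ) + 1) / z) *
        ((∑ s ∈ Finset.Icc 1 n, (1 / (s : ℂ)) * ((z - 1) / z) ^ (n - s)) -
          ((z - 1) / z) ^ n * Complex.log (1 - z)) := by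
  induction n with
  | zero => simp [hypF_one_one_two hz hz0, div_eq_inv_mul]
  | succ n ih =>
    have hrec := one_sub_mul_hypF_one_one (n + 1) hz
    push_cast at hrec ⊢
    rw [sum_Icc_succ_inv_mul_pow]
    rw [show (n : ℂ) + 1 + 1 = n + 2 by ring, ih] at hrec
    rw [show (n : ℂ) + 1 + 2 = n + 3 by ring] at hrec ⊢
    set S := ∑ s ∈ Finset.Icc 1 n, (1 / (s : ℂ)) * ((z - 1) / z) ^ (n - s)
    set L := Complex.log (1 - z)
    set w := (z - 1) / z with hw
    have hwz : 1 - z = -(w * z) := by rw [hw]; field_simp; ring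
    rw [hwz] at hrec
    have hn1 : (n : ℂ) + 1 ≠ 0 := Nat.cast_add_one_ne_zero n
    have hn2 : (n : ℂ) + 2 ≠ 0 := by exact_mod_cast (by omega : n + 2 ≠ 0)
    field_simp at hrec ⊢
    linear_combination hrec

/-- For `n ≥ 1` and `0 < |z| < 1`,
`F(1,1,n+2,z) = ((n+1)/z)(∑_{s=1}^n (1/s)((z-1)/z)^{n-s} − ((z-1)/z)^n log(1−z))`. -/
theorem stmt_2 (n : ℕ) (hn : 1 ≤ n) (z : ℂ) (hz : ‖z‖ < 1) (hz0 : z ≠ 0) :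
    hypF 1 1 ((n : ℂ) + 2) z =
      (((n : ℂ) + 1) / z) *
        ((∑ s ∈ Finset.Icc 1 n, (1 / (s : ℂ)) * ((z - 1) / z) ^ (n - s)) -
          ((z - 1) / z) ^ n * Complex.log (1 - z)) :=
  stmt_2_general n z hz hz0
end

section
/- For a fixed real z with 0 < |z| < 1, the sequence σ_N(z) = z^N ∑_{s=1}^{N} z^{−s}/s satisfies σ_N(z) ∼ 1/((1−z) N) as N → ∞, i.e. N·σ_N(z) → 1/(1−z). -/
/-!
Substituting `s = N - k` gives `N σ_N(z) = ∑_{k < N} N / (N - k) · z^k`. Each coefficient tends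
to `1` as `N → ∞` and is at most `k + 1`, and `∑ (k + 1) |z|^k < ∞`, so by Tannery's theorem
(dominated convergence for series) the sum tends to `∑ z^k = 1 / (1 - z)`.
-/

open Filter Topology Finset

theorem natCast_mul_pow_mul_sum_Icc_eq_sum_range {K : Type*} [Field K] {z : K} (hz : z ≠ 0)
    (N : ℕ) :
    (N : K) * (z ^ N * ∑ s ∈ Icc 1 N, (1 / z ^ s) / (s : K)) =
      ∑ k ∈ range N, (N : K) / (N - k) * z ^ k := by
  rw [mul_sum, mul_sum]
  refine sum_nbij' (N - ·) (N - ·) ?_ ?_ ?_ ?_ fun s hs => ?_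
  all_goals try (intro s hs; simp only [mem_Icc, mem_range] at hs ⊢; omega)
  have hsN : s ≤ N := (mem_Icc.mp hs).2
  have hpow : z ^ N = z ^ (N - s) * z ^ s := by rw [← pow_add, Nat.sub_add_cancel hsN]
  rw [Nat.cast_sub hsN, sub_sub_cancel, hpow]
  field_simp

/-- The coefficient `N / (N - k)` of `z ^ k` in `N σ_N(z)`, set to `0` outside the range `k < N`
of the finite sum. -/
noncomputable def truncatedWeight (N k : ℕ) : ℝ := if k < N then N / (N - k) else 0

theorem truncatedWeight_nonneg (N k : ℕ) : 0 ≤ truncatedWeight N k := by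
  unfold truncatedWeight
  split_ifs with hk
  · have : (k : ℝ) < N := by exact_mod_cast hk
    exact div_nonneg N.cast_nonneg (by linarith)
  · exact le_rfl

theorem truncatedWeight_le (N k : ℕ) : truncatedWeight N k ≤ k + 1 := by
  unfold truncatedWeight
  split_ifs with hk
  · have hk' : (k : ℝ) + 1 ≤ N := by exact_mod_cast hk
    rw [div_le_iff₀ (by linarith)]
    nlinarith [k.cast_nonneg (α := ℝ)]
  · positivity

theorem tendsto_truncatedWeight (k : ℕ) :
    Tendsto (fun N => truncatedWeight N k) atTop (𝓝 1) := by
  have h : Tendsto (fun N : ℕ => (1 - (k : ℝ) / N)⁻¹) atTop (𝓝 1) := by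
    simpa using ((tendsto_const_div_atTop_nhds_zero_nat (k : ℝ)).const_sub 1).inv₀ (by simp)
  refine h.congr' ?_
  filter_upwards [eventually_gt_atTop k] with N hN
  have hN0 : (N : ℝ) ≠ 0 := Nat.cast_ne_zero.mpr (by omega)
  rw [truncatedWeight, if_pos hN, one_sub_div hN0, inv_div]

theorem tendsto_sum_range_natCast_div_sub_mul_pow {𝕜 : Type*} [RCLike 𝕜] {z : 𝕜}
    (hz : ‖z‖ < 1) :
    Tendsto (fun N : ℕ => ∑ k ∈ range N, (N : 𝕜) / (N - k) * z ^ k) atTop (𝓝 (1 - z)⁻¹) := by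
  have h_sum : Summable fun k : ℕ => ((k : ℝ) + 1) * ‖z‖ ^ k := by
    simpa [add_mul] using
      (summable_pow_mul_geometric_of_norm_lt_one 1 (by simpa using hz)).add
        (summable_geometric_of_lt_one (norm_nonneg z) hz)
  have h_pointwise (k : ℕ) :
      Tendsto (fun N => (truncatedWeight N k : 𝕜) * z ^ k) atTop (𝓝 (z ^ k)) := by
    simpa using
      ((RCLike.continuous_ofReal.tendsto 1).comp (tendsto_truncatedWeight k)).mul_const (z ^ k)
  have h_bound (N k : ℕ) : ‖(truncatedWeight N k : 𝕜) * z ^ k‖ ≤ ((k : ℝ) + 1) * ‖z‖ ^ k := by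
    rw [norm_mul, norm_pow, RCLike.norm_ofReal, abs_of_nonneg (truncatedWeight_nonneg N k)]
    gcongr
    exact truncatedWeight_le N k
  have h_lim := tendsto_tsum_of_dominated_convergence h_sum h_pointwise (.of_forall h_bound)
  rw [tsum_geometric_of_norm_lt_one hz] at h_lim
  refine h_lim.congr fun N => ?_
  rw [tsum_eq_sum (s := range N)]
  · refine sum_congr rfl fun k hk => ?_
    rw [truncatedWeight, if_pos (mem_range.mp hk)]
    push_cast
    rfl
  · intro k hk
    rw [truncatedWeight, if_neg (by simpa using hk)]
    simp

/-- For a fixed real `z` with `0 < |z| < 1`, the sequence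
`σ_N(z) = z^N ∑_{s=1}^N z^{−s}/s` satisfies `N·σ_N(z) → 1/(1−z)` as `N → ∞`. -/
theorem stmt_8 (z : ℝ) (hz0 : z ≠ 0) (hz : |z| < 1) :
    Tendsto (fun N : ℕ =>
        (N : ℝ) * (z ^ N * ∑ s ∈ Finset.Icc 1 N, (1 / z ^ s) / (s : ℝ)))
      atTop (nhds (1 / (1 - z))) := by
  simp_rw [natCast_mul_pow_mul_sum_Icc_eq_sum_range hz0, one_div]
  exact tendsto_sum_range_natCast_div_sub_mul_pow (by rwa [Real.norm_eq_abs])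
end

section
/- For every real z < 1 with z ≠ 0, and every N ≥ 1, the partial sums satisfy ∑_{n=1}^{N} (z/(n+1)) F(1,1,n+2,z) = z H_N + (1−z) log(1−z) + (1−z) R_N, where H_N is the N-th harmonic number and R_N = z̃^N ( ∑_{s=1}^{N} z̃^{−s}/s − log(1−z) ) with z̃ = (z−1)/z. -/
open scoped BigOperators

/-!
With `w = (z - 1)/z`, the `n`-th summand `(z/(n+1)) F(1,1,n+2,z)` is
`R n = w ^ n (∑_{s ≤ n} w⁻ˢ/s - log (1 - z))`, which satisfies `R (n+1) = w R n + 1/(n+1)`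
and `R 0 = -log (1 - z)`. Summing the recurrence gives
`(1 - w) ∑_{n=1}^N R n = H_N + w (R 0 - R N)`, and `1 - w = 1/z` turns this into the claim.
-/

/-- The Gauss hypergeometric function `F(1,1,n+2,z)` for real `z < 1`, `z ≠ 0`, given by
its closed form `((n+1)/z)(∑_{s=1}^n (1/s) z̃^{n−s} − z̃^n log(1−z))` with `z̃ = (z−1)/z`
(this agrees with the hypergeometric series for `|z| < 1` and is its analytic
continuation for `z ≤ −1`). -/
noncomputable def F11 (n : ℕ) (z : ℝ) : ℝ :=
  (((n : ℝ) + 1) / z) *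
    ((∑ s ∈ Finset.Icc 1 n, (1 / (s : ℝ)) * ((z - 1) / z) ^ (n - s)) -
      ((z - 1) / z) ^ n * Real.log (1 - z))

open Finset

theorem one_sub_mul_sum_Icc_eq_of_recurrence {K : Type*} [CommRing K] {R a : ℕ → K} {w : K}
    (h : ∀ n, R (n + 1) = w * R n + a (n + 1)) (N : ℕ) :
    (1 - w) * ∑ n ∈ Icc 1 N, R n = ∑ n ∈ Icc 1 N, a n + w * (R 0 - R N) := by
  induction N with
  | zero => simp
  | succ N ih =>
    rw [sum_Icc_succ_top (by omega), sum_Icc_succ_top (by omega), mul_add, ih, h]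
    ring

section Remainder

variable {K : Type*} [Field K]

noncomputable def hypergeomRemainder (w L : K) (n : ℕ) : K :=
  w ^ n * ((∑ s ∈ Icc 1 n, (1 / w ^ s) / (s : K)) - L)

theorem hypergeomRemainder_zero (w L : K) : hypergeomRemainder w L 0 = -L := by
  simp [hypergeomRemainder]

theorem hypergeomRemainder_succ {w : K} (L : K) (hw : w ≠ 0) (n : ℕ) :
    hypergeomRemainder w L (n + 1) = w * hypergeomRemainder w L n + 1 / ((n + 1 : ℕ) : K) := by
  rw [hypergeomRemainder, hypergeomRemainder, sum_Icc_succ_top (by omega)]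
  field_simp
  ring

end Remainder

theorem div_mul_F11_eq_hypergeomRemainder {z : ℝ} (hz0 : z ≠ 0) (hz1 : z ≠ 1) (n : ℕ) :
    z / ((n : ℝ) + 1) * F11 n z = hypergeomRemainder ((z - 1) / z) (Real.log (1 - z)) n := by
  have hw : (z - 1) / z ≠ 0 := div_ne_zero (sub_ne_zero.mpr hz1) hz0
  have hcancel : z / ((n : ℝ) + 1) * (((n : ℝ) + 1) / z) = 1 := by field_simp
  rw [F11, ← mul_assoc, hcancel, one_mul, hypergeomRemainder, mul_sub, mul_sum]
  congr 1
  refine sum_congr rfl fun s hs => ?_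
  rw [pow_sub₀ _ hw (mem_Icc.mp hs).2]
  field_simp

theorem stmt_9_general (z : ℝ) (hz : z < 1) (hz0 : z ≠ 0) (N : ℕ) :
    (∑ n ∈ Finset.Icc 1 N, (z / ((n : ℝ) + 1)) * F11 n z) =
      z * (∑ s ∈ Finset.Icc 1 N, (1 : ℝ) / (s : ℝ)) + (1 - z) * Real.log (1 - z) +
        (1 - z) * (((z - 1) / z) ^ N *
          ((∑ s ∈ Finset.Icc 1 N, (1 / ((z - 1) / z) ^ s) / (s : ℝ)) - Real.log (1 - z))) := by
  set w := (z - 1) / z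
  set L := Real.log (1 - z)
  have hw : w ≠ 0 := div_ne_zero (by linarith) hz0
  have hsum := one_sub_mul_sum_Icc_eq_of_recurrence (a := fun n => 1 / (n : ℝ))
    (hypergeomRemainder_succ L hw) N
  rw [sum_congr rfl fun n _ => div_mul_F11_eq_hypergeomRemainder hz0 hz.ne n]
  calc ∑ n ∈ Icc 1 N, hypergeomRemainder w L n
      = z * ((1 - w) * ∑ n ∈ Icc 1 N, hypergeomRemainder w L n) := by
        simp only [w]; field_simp; ring
    _ = _ := by
        rw [hsum, hypergeomRemainder_zero, hypergeomRemainder]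
        simp only [w]; field_simp; ring

/-- For every real `z < 1` with `z ≠ 0` and every `N ≥ 1`,
`∑_{n=1}^N (z/(n+1)) F(1,1,n+2,z) = z H_N + (1−z) log(1−z) + (1−z) R_N`,
where `H_N` is the `N`-th harmonic number and
`R_N = z̃^N (∑_{s=1}^N z̃^{−s}/s − log(1−z))` with `z̃ = (z−1)/z`. -/
theorem stmt_9 (z : ℝ) (hz : z < 1) (hz0 : z ≠ 0) (N : ℕ) (hN : 1 ≤ N) :
    (∑ n ∈ Finset.Icc 1 N, (z / ((n : ℝ) + 1)) * F11 n z) =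
      z * (∑ s ∈ Finset.Icc 1 N, (1 : ℝ) / (s : ℝ)) + (1 - z) * Real.log (1 - z) +
        (1 - z) * (((z - 1) / z) ^ N *
          ((∑ s ∈ Finset.Icc 1 N, (1 / ((z - 1) / z) ^ s) / (s : ℝ)) - Real.log (1 - z))) :=
  stmt_9_general z hz hz0 N
end

section
/- Let q ≥ 1 be a natural number, z a real (or complex) parameter, and let ω_1,…,ω_q be the roots (with multiplicity) of the polynomial x ↦ ∏_{k=1}^q (x − ω_k) = z^{-q} (x+1−q)_q F(−q, q+1, x+1−q, z) (the Meixner polynomial M_q(x; −2q, z/(z−1)) up to normalization). Then ∑_{k=1}^{q} ω_k = q(q+1) z + q(q−1)/2. -/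
/-!
Both sides of the hypothesis are polynomials in `x`, so they agree coefficientwise. The `s`-th
summand is `z^s` times the shifted Pochhammer polynomial `(x+1−q+s)_{q−s}`, of degree `q − s`.
Hence the `x^q` coefficient forces `z^{-q} = 1`, and only `s = 0` and `s = 1` reach `x^{q-1}`:
`(x+1−q)_q` contributes `q(1−q) + q(q−1)/2` and `s = 1` contributes `−q(q+1) z`. By Vieta this
coefficient is `−∑ ω_k`.
-/

open Polynomial Finset

section CommRing

variable {R : Type*} [CommRing R]

theorem ascPochhammer_comp_X_add_C (n : ℕ) (a : R) :
    (ascPochhammer R n).comp (X + C a) = ∏ j ∈ range n, (X - C (-(a + j))) := by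
  induction n with
  | zero => simp
  | succ n ih =>
    rw [ascPochhammer_succ_right, mul_comp, ih, prod_range_succ]
    simp only [add_comp, X_comp, natCast_comp, map_neg, map_add, map_natCast]
    ring

variable [Nontrivial R]

theorem coeff_prod_X_sub_C_card {ι : Type*} (s : Finset ι) (f : ι → R) :
    (∏ i ∈ s, (X - C (f i))).coeff #s = 1 := by
  simpa using (monic_prod_X_sub_C f s).coeff_natDegree

theorem natDegree_ascPochhammer_comp_X_add_C (n : ℕ) (a : R) :
    ((ascPochhammer R n).comp (X + C a)).natDegree = n := by
  rw [ascPochhammer_comp_X_add_C, natDegree_finsetProd_X_sub_C_eq_card, card_range]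

theorem coeff_ascPochhammer_comp_X_add_C_self (n : ℕ) (a : R) :
    ((ascPochhammer R n).comp (X + C a)).coeff n = 1 := by
  rw [ascPochhammer_comp_X_add_C]
  simpa only [card_range] using coeff_prod_X_sub_C_card (range n) fun j => -(a + j)

theorem coeff_ascPochhammer_comp_X_add_C_of_lt {n k : ℕ} (h : n < k) (a : R) :
    ((ascPochhammer R n).comp (X + C a)).coeff k = 0 :=
  coeff_eq_zero_of_natDegree_lt (by rwa [natDegree_ascPochhammer_comp_X_add_C])

end CommRing

section Field

variable {K : Type*} [Field K]

theorem coeff_ascPochhammer_succ_comp_X_add_C [CharZero K] (n : ℕ) (a : K) :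
    ((ascPochhammer K (n + 1)).comp (X + C a)).coeff n = (n + 1) * a + (n + 1) * n / 2 := by
  have hgauss : ((∑ j ∈ range (n + 1), j : ℕ) : K) * 2 = (n + 1) * n := by
    exact_mod_cast sum_range_id_mul_two (n + 1)
  have h := prod_X_sub_C_coeff_card_pred (range (n + 1)) (fun j => -(a + j)) (by simp)
  rw [card_range, Nat.add_sub_cancel, ← ascPochhammer_comp_X_add_C] at h
  rw [h, sum_neg_distrib, neg_neg, sum_add_distrib, sum_const, card_range, nsmul_eq_mul]
  push_cast at hgauss ⊢
  linear_combination hgauss / 2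

noncomputable def meixnerCoeff (q s : ℕ) : K :=
  (ascPochhammer K s).eval (-(q : K)) * (ascPochhammer K s).eval ((q : K) + 1) /
    (Nat.factorial s : K)

theorem meixnerCoeff_zero (q : ℕ) : meixnerCoeff q 0 = (1 : K) := by
  simp [meixnerCoeff]

theorem meixnerCoeff_one (q : ℕ) : meixnerCoeff q 1 = -((q : K) * (q + 1)) := by
  simp [meixnerCoeff]

/-- `z^{-q} (X+1−q)_q F(−q, q+1, X+1−q, z)`, with `(X+1−q)_q / (X+1−q)_s` cancelled to
`(X+1−q+s)_{q−s}` so that no division by a polynomial occurs. -/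
noncomputable def meixnerPoly (q : ℕ) (z : K) : K[X] :=
  C (z ^ (-(q : ℤ))) * ∑ s ∈ range (q + 1),
    C (meixnerCoeff q s * z ^ s) * (ascPochhammer K (q - s)).comp (X + C (1 - q + s : K))

theorem eval_meixnerPoly (q : ℕ) (z x : K) :
    (meixnerPoly q z).eval x = z ^ (-(q : ℤ)) * ∑ s ∈ range (q + 1),
      ((ascPochhammer K s).eval (-(q : K)) * (ascPochhammer K s).eval ((q : K) + 1) /
        (Nat.factorial s : K)) * z ^ s * (ascPochhammer K (q - s)).eval (x + 1 - q + s) := by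
  simp only [meixnerPoly, meixnerCoeff, eval_mul, eval_C, eval_finsetSum, eval_comp, eval_add,
    eval_X]
  congr! 4
  ring

theorem coeff_meixnerPoly (q k : ℕ) (z : K) :
    (meixnerPoly q z).coeff k = z ^ (-(q : ℤ)) * ∑ s ∈ range (q + 1),
      meixnerCoeff q s * z ^ s *
        ((ascPochhammer K (q - s)).comp (X + C (1 - q + s : K))).coeff k := by
  simp only [meixnerPoly, coeff_C_mul, finsetSum_coeff]

theorem coeff_meixnerPoly_succ_self (n : ℕ) (z : K) :
    (meixnerPoly (n + 1) z).coeff (n + 1) = z ^ (-((n + 1 : ℕ) : ℤ)) := by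
  rw [coeff_meixnerPoly, sum_range_succ', sum_eq_zero fun s _ => ?_]
  · rw [Nat.sub_zero, coeff_ascPochhammer_comp_X_add_C_self]
    simp [meixnerCoeff_zero]
  · rw [coeff_ascPochhammer_comp_X_add_C_of_lt (by omega), mul_zero]

theorem coeff_meixnerPoly_succ [CharZero K] (n : ℕ) (z : K) :
    (meixnerPoly (n + 1) z).coeff n = -z ^ (-((n + 1 : ℕ) : ℤ)) *
      (((n + 1 : ℕ) : K) * (((n + 1 : ℕ) : K) + 1) * z +
        ((n + 1 : ℕ) : K) * (((n + 1 : ℕ) : K) - 1) / 2) := by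
  rw [coeff_meixnerPoly, sum_range_succ', sum_range_succ', sum_eq_zero fun s hs => ?_]
  · simp only [zero_add, Nat.sub_zero, Nat.add_sub_cancel, Nat.cast_zero, Nat.cast_one,
      pow_zero, pow_one, meixnerCoeff_zero, meixnerCoeff_one,
      coeff_ascPochhammer_comp_X_add_C_self, coeff_ascPochhammer_succ_comp_X_add_C]
    push_cast
    ring
  · rw [coeff_ascPochhammer_comp_X_add_C_of_lt (by grind), mul_zero]

end Field

theorem stmt_10_general (q : ℕ) (hq : 1 ≤ q) (z : ℂ) (ω : Fin q → ℂ)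
    (hroots : ∀ x : ℂ,
      (∏ k : Fin q, (x - ω k)) =
        z ^ (-(q : ℤ)) * ∑ s ∈ Finset.range (q + 1),
          ((ascPochhammer ℂ s).eval (-(q : ℂ)) * (ascPochhammer ℂ s).eval ((q : ℂ) + 1) /
              (Nat.factorial s : ℂ)) * z ^ s *
            (ascPochhammer ℂ (q - s)).eval (x + 1 - (q : ℂ) + (s : ℂ))) :
    (∑ k : Fin q, ω k) = (q : ℂ) * ((q : ℂ) + 1) * z + (q : ℂ) * ((q : ℂ) - 1) / 2 := by
  obtain ⟨n, rfl⟩ := Nat.exists_eq_add_of_le' hq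
  have hP : ∏ k : Fin (n + 1), (X - C (ω k)) = meixnerPoly (n + 1) z :=
    Polynomial.funext fun x => by simp [eval_prod, hroots, eval_meixnerPoly]
  have hlead : z ^ (-((n + 1 : ℕ) : ℤ)) = 1 := by
    simpa [hP, coeff_meixnerPoly_succ_self] using coeff_prod_X_sub_C_card univ ω
  have hnext := prod_X_sub_C_coeff_card_pred univ ω (by simp)
  rw [card_univ, Fintype.card_fin, Nat.add_sub_cancel, hP, coeff_meixnerPoly_succ, hlead] at hnext
  linear_combination hnext

/-- Sum of the roots of the (monic, degree `q`) Meixner-type polynomial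
`x ↦ z^{-q} (x+1−q)_q F(−q, q+1, x+1−q, z)`
`= z^{-q} ∑_{s=0}^q ((−q)_s (q+1)_s / s!) z^s (x+1−q+s)_{q−s}`
(the second form results from cancelling `(x+1−q)_s` and is valid identically in `x`).
If `ω_1, …, ω_q` are its roots with multiplicity, then
`∑_k ω_k = q(q+1) z + q(q−1)/2`. -/
theorem stmt_10 (q : ℕ) (hq : 1 ≤ q) (z : ℂ) (hz : z ≠ 0) (ω : Fin q → ℂ)
    (hroots : ∀ x : ℂ,
      (∏ k : Fin q, (x - ω k)) =
        z ^ (-(q : ℤ)) * ∑ s ∈ Finset.range (q + 1),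
          ((ascPochhammer ℂ s).eval (-(q : ℂ)) * (ascPochhammer ℂ s).eval ((q : ℂ) + 1) /
              (Nat.factorial s : ℂ)) * z ^ s *
            (ascPochhammer ℂ (q - s)).eval (x + 1 - (q : ℂ) + (s : ℂ))) :
    (∑ k : Fin q, ω k) = (q : ℂ) * ((q : ℂ) + 1) * z + (q : ℂ) * ((q : ℂ) - 1) / 2 :=
  stmt_10_general q hq z ω hroots
end

section
/- For ± denoting sign η = ±1 and 0 < r₀ (with r₀ < 1 when η = −1): ∫_0^1 (4 r₀² r / (1 + η r₀² r²)²) · ( log(1 − r²) + γ − log 2 + log( 2 r₀/(1 + η r₀² r²) ) ) dr = (A/2π)(γ − 1 + log r₀), where A = 4π r₀²/(1 + η r₀²). -/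
/-!
Put `a = η r₀²` and `w(r) = (1 - r²) / (1 + a r²)`. On `[0, 1)` the bracket in the integrand is
`log w(r) + γ + log r₀`, and the weight `4 r₀² r / (1 + a r²)²` is `-(2 r₀² / (1 + a)) w'(r)`.
Since `w` decreases from `1` to `0`, the substitution `u = w(r)` turns the integral into
`(2 r₀² / (1 + a)) ∫₀¹ (log u + γ + log r₀) du`, and `∫₀¹ log u du = -1`.
-/

open Real Set intervalIntegral

section

variable {a : ℝ}

lemma one_add_mul_sq_pos (ha : -1 < a) {r : ℝ} (hr : r ∈ Icc (0 : ℝ) 1) : 0 < 1 + a * r ^ 2 := by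
  obtain ⟨h0, h1⟩ := hr
  rcases le_or_gt 0 a with ha0 | ha0
  · positivity
  · nlinarith [mul_le_mul_of_nonneg_left h1 h0]

lemma hasDerivAt_one_sub_sq_div (r : ℝ) (hr : 1 + a * r ^ 2 ≠ 0) :
    HasDerivAt (fun r : ℝ => (1 - r ^ 2) / (1 + a * r ^ 2))
      (-(2 * (1 + a) * r) / (1 + a * r ^ 2) ^ 2) r := by
  have hnum : HasDerivAt (fun r : ℝ => 1 - r ^ 2) (-(2 * r)) r := by
    simpa using (hasDerivAt_pow 2 r).const_sub 1
  have hden : HasDerivAt (fun r : ℝ => 1 + a * r ^ 2) (a * (2 * r)) r := by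
    simpa using ((hasDerivAt_pow 2 r).const_mul a).const_add 1
  exact (hnum.fun_div hden hr).congr_deriv (by ring)

theorem integral_div_sq_mul_log_one_sub_sq_div (ha : -1 < a) (c : ℝ) :
    ∫ r in (0 : ℝ)..1, r / (1 + a * r ^ 2) ^ 2 * (log ((1 - r ^ 2) / (1 + a * r ^ 2)) + c) =
      (c - 1) / (2 * (1 + a)) := by
  have h1a : 0 < 1 + a := by linarith
  have hpos : ∀ r ∈ Ioo (0 : ℝ) 1, 0 < 1 + a * r ^ 2 := fun r hr =>
    one_add_mul_sq_pos ha (Ioo_subset_Icc_self hr)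
  have hsubst : ∫ r in (0 : ℝ)..1, (fun u => log u + c) ((1 - r ^ 2) / (1 + a * r ^ 2)) *
        (-(2 * (1 + a) * r) / (1 + a * r ^ 2) ^ 2) = ∫ u in (1 : ℝ)..0, log u + c := by
    have hIoo : ∀ r ∈ Ioo (min (0 : ℝ) 1) (max 0 1), r ∈ Ioo (0 : ℝ) 1 := by simp
    have hderiv_nonpos : ∀ r ∈ Ioo (0 : ℝ) 1, -(2 * (1 + a) * r) / (1 + a * r ^ 2) ^ 2 ≤ 0 :=
      fun r hr => div_nonpos_of_nonpos_of_nonneg (by nlinarith [hr.1]) (by positivity)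
    convert integral_comp_mul_deriv_of_deriv_nonpos (g := fun u => log u + c)
      (ContinuousOn.div (by fun_prop) (by fun_prop) fun r hr =>
        (one_add_mul_sq_pos ha (by rwa [uIcc_of_le zero_le_one] at hr)).ne')
      (fun r hr => hasDerivAt_one_sub_sq_div r (hpos r (hIoo r hr)).ne')
      (fun r hr => hderiv_nonpos r (hIoo r hr)) using 2 <;> norm_num
  have hlog : ∫ u in (1 : ℝ)..0, log u + c = 1 - c := by
    rw [integral_symm, integral_add intervalIntegrable_log' intervalIntegrable_const, integral_log,
      integral_const]
    simp only [log_one, mul_zero, smul_eq_mul]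
    ring
  calc ∫ r in (0 : ℝ)..1, r / (1 + a * r ^ 2) ^ 2 * (log ((1 - r ^ 2) / (1 + a * r ^ 2)) + c)
      = -(1 / (2 * (1 + a))) * ∫ r in (0 : ℝ)..1,
          (fun u => log u + c) ((1 - r ^ 2) / (1 + a * r ^ 2)) *
            (-(2 * (1 + a) * r) / (1 + a * r ^ 2) ^ 2) := by
        rw [← integral_const_mul]
        congr 1 with r
        field_simp
    _ = (c - 1) / (2 * (1 + a)) := by
        rw [hsubst, hlog]
        field_simp
        ring

end

/-- For `η = ±1` and `r₀ > 0` (with `r₀ < 1` when `η = −1`), and `A = 4π r₀²/(1 + η r₀²)`: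
`∫_0^1 (4 r₀² r/(1 + η r₀² r²)²)(log(1 − r²) + γ − log 2 + log(2 r₀/(1 + η r₀² r²))) dr
  = (A/2π)(γ − 1 + log r₀)`. -/
theorem stmt_16 (η : ℝ) (hη : η = 1 ∨ η = -1) (r₀ : ℝ) (hr₀ : 0 < r₀)
    (hr₀1 : η = -1 → r₀ < 1) :
    (∫ r in (0 : ℝ)..1,
        (4 * r₀ ^ 2 * r / (1 + η * r₀ ^ 2 * r ^ 2) ^ 2) *
          (Real.log (1 - r ^ 2) + Real.eulerMascheroniConstant - Real.log 2 +
            Real.log (2 * r₀ / (1 + η * r₀ ^ 2 * r ^ 2)))) =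
      ((4 * Real.pi * r₀ ^ 2 / (1 + η * r₀ ^ 2)) / (2 * Real.pi)) *
        (Real.eulerMascheroniConstant - 1 + Real.log r₀) := by
  set a := η * r₀ ^ 2
  have ha : -1 < a := by
    rcases hη with rfl | rfl
    · simp only [a, one_mul]; linarith [sq_nonneg r₀]
    · simp only [a, neg_one_mul, neg_lt_neg_iff]; nlinarith [hr₀1 rfl]
  have hintegrand : ∀ r ∈ Ico (0 : ℝ) 1,
      log (1 - r ^ 2) + eulerMascheroniConstant - log 2 +
          log (2 * r₀ / (1 + a * r ^ 2)) =
        log ((1 - r ^ 2) / (1 + a * r ^ 2)) + (eulerMascheroniConstant + log r₀) := by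
    intro r ⟨h0, h1⟩
    have hw : 0 < 1 + a * r ^ 2 := one_add_mul_sq_pos ha ⟨h0, h1.le⟩
    have hr : 0 < 1 - r ^ 2 := by nlinarith
    rw [log_div hr.ne' hw.ne', log_div (by positivity) hw.ne',
      log_mul two_ne_zero hr₀.ne']
    ring
  rw [intervalIntegral.integral_congr_ae (g := fun r => 4 * r₀ ^ 2 * (r / (1 + a * r ^ 2) ^ 2 *
      (log ((1 - r ^ 2) / (1 + a * r ^ 2)) + (eulerMascheroniConstant + log r₀))))]
  · rw [integral_const_mul, integral_div_sq_mul_log_one_sub_sq_div ha]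
    field_simp
    ring
  · filter_upwards [MeasureTheory.measure_eq_zero_iff_ae_notMem.1
      (MeasureTheory.measure_singleton (1 : ℝ))] with r hr1 hr
    rw [uIoc_of_le zero_le_one] at hr
    rw [hintegrand r ⟨hr.1.le, lt_of_le_of_ne hr.2 hr1⟩]
    ring
end
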